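/- arXiv:1710.10875 — 3 statements merged into one kernel-verified Lean document; each statement's English description precedes it below -/
import Mathlib

section
/- For N = 0 and for every fixed integer N ≥ 2, the set {n ∈ ℕ : B(n) − β(n) = N} has positive natural density; that is, the limit as x → ∞ of (1/x)·#{n ≤ x : B(n) − β(n) = N} exists and is strictly positive. -/
open Filter

/-- `B n` is the sum of the prime divisors of `n` counted with multiplicity
(so `B 1 = 0`). -/
def B (n : ℕ) : ℕ := (Nat.primeFactorsList n).sum

/-- `beta n` is the sum of the distinct prime divisors of `n` (so `beta 1 = 0`). -/
def beta (n : ℕ) : ℕ := ∑ p ∈ n.primeFactors, p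

/-!
Write `B n - beta n = ∑ p ∣ n, (v_p(n) - 1) p`. Truncating the sum to the primes `p ≤ Q` gives
a condition on `n` that is periodic modulo `∏_{p ≤ Q} p ^ (N + 2)` (a valuation `≥ N + 2` alone
pushes the sum above `N`), so it has a density `d_Q`. It differs from the condition
`B n - beta n = N` only on integers divisible by `d ^ 2` for some `d > Q`, a set of density
at most `2 / (Q + 1)`; hence `d_Q` converges and its limit is the density we want.
For positivity take `w = 2 ^ a * 3 ^ b` with `B w - beta w = N`: every `n ≡ w [MOD w ^ 2]` that
is not divisible by `p ^ 2` for the primes `p ≤ Q` not dividing `w` satisfies the truncated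
condition, and a sieve shows that these `n` have density at least `1 / (12 * w ^ 2)`.
-/

open Finset Topology

def excess (s : Finset ℕ) (n : ℕ) : ℕ := ∑ p ∈ s, (n.factorization p - 1) * p

lemma B_eq_sum_factorization_mul (n : ℕ) :
    B n = ∑ p ∈ n.primeFactors, n.factorization p * p := by
  rw [B, ← Multiset.sum_coe, ← Multiset.map_id (n.primeFactorsList : Multiset ℕ),
    sum_multiset_map_count]
  refine sum_congr rfl fun p _ => ?_
  rw [Multiset.coe_count, Nat.primeFactorsList_count_eq, smul_eq_mul, id]

lemma B_sub_beta_eq_excess (n : ℕ) : B n - beta n = excess n.primeFactors n := by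
  rw [B_eq_sum_factorization_mul, beta, excess, ← sum_tsub_distrib]
  · simp only [Nat.sub_one_mul]
  · intro p hp
    obtain ⟨hprime, hpn, hn⟩ := Nat.mem_primeFactors.mp hp
    exact Nat.le_mul_of_pos_left p (hprime.factorization_pos_of_dvd hn hpn)

lemma excess_eq_of_subset {s t : Finset ℕ} {n : ℕ} (hst : s ⊆ t)
    (h : ∀ p ∈ t, p ∉ s → n.factorization p ≤ 1) : excess t n = excess s n :=
  (sum_subset hst fun p hpt hps => by rw [Nat.sub_eq_zero_of_le (h p hpt hps), zero_mul]).symm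

lemma B_sub_beta_eq_excess_primesBelow {n : ℕ} (Q : ℕ) (hn : n ≠ 0)
    (h : ∀ d, Q < d → ¬ d ^ 2 ∣ n) : B n - beta n = excess (Q + 1).primesBelow n := by
  rw [B_sub_beta_eq_excess,
    ← excess_eq_of_subset (t := n.primeFactors ∪ (Q + 1).primesBelow) subset_union_left,
    excess_eq_of_subset (t := n.primeFactors ∪ (Q + 1).primesBelow) subset_union_right]
  · intro p hp hpQ
    have hp' : p ∈ n.primeFactors := by simpa [hpQ] using hp
    have hprime := Nat.prime_of_mem_primeFactors hp'
    have hQp : Q < p := by simpa [Nat.mem_primesBelow, hprime, Nat.lt_succ_iff] using hpQ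
    by_contra! hle
    exact h p hQp ((hprime.pow_dvd_iff_le_factorization hn).mpr hle)
  · intro p _ hp
    rw [← Nat.support_factorization, Finsupp.notMem_support_iff] at hp
    omega

lemma min_factorization_eq_of_modEq {p e a b : ℕ} (hp : p.Prime) (ha : a ≠ 0) (hb : b ≠ 0)
    (h : a ≡ b [MOD p ^ e]) : min (a.factorization p) e = min (b.factorization p) e := by
  have hpe : p ^ e ≠ 0 := pow_ne_zero e hp.ne_zero
  have key : ∀ c, c ≠ 0 → min (c.factorization p) e = (c.gcd (p ^ e)).factorization p := by
    intro c hc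
    rw [Nat.factorization_gcd hc hpe, Finsupp.inf_apply, hp.factorization_pow,
      Finsupp.single_eq_same]
  rw [key a ha, key b hb, h.gcd_eq]

-- A single valuation `≥ N + 2` already pushes both sums above `N`.
lemma excess_eq_iff_sum_min {s : Finset ℕ} (hs : ∀ p ∈ s, p.Prime) (n N : ℕ) :
    excess s n = N ↔ ∑ p ∈ s, (min (n.factorization p) (N + 2) - 1) * p = N := by
  by_cases hbig : ∃ p ∈ s, N + 2 ≤ n.factorization p
  · obtain ⟨p, hp, hle⟩ := hbig
    have hterm : ∀ k, N + 2 ≤ k → N < (k - 1) * p := fun k hk =>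
      lt_of_lt_of_le (by omega) (Nat.mul_le_mul (by omega : N + 1 ≤ k - 1) (hs p hp).two_le)
    have h1 := (hterm _ hle).trans_le
      (single_le_sum (f := fun p => (n.factorization p - 1) * p) (fun _ _ => Nat.zero_le _) hp)
    have h2 := (hterm _ (le_min hle le_rfl)).trans_le
      (single_le_sum (f := fun p => (min (n.factorization p) (N + 2) - 1) * p)
      (fun _ _ => Nat.zero_le _) hp)
    simp only [excess]
    omega
  · push Not at hbig
    refine Eq.congr_left (sum_congr rfl fun p hp => ?_)
    rw [min_eq_left (hbig p hp).le]

lemma excess_eq_iff_of_modEq {s : Finset ℕ} (hs : ∀ p ∈ s, p.Prime) {a b : ℕ} (N : ℕ)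
    (ha : a ≠ 0) (hb : b ≠ 0) (h : a ≡ b [MOD ∏ p ∈ s, p ^ (N + 2)]) :
    excess s a = N ↔ excess s b = N := by
  rw [excess_eq_iff_sum_min hs, excess_eq_iff_sum_min hs]
  refine Eq.congr_left (sum_congr rfl fun p hp => ?_)
  rw [min_factorization_eq_of_modEq (hs p hp) ha hb
    (h.of_dvd (dvd_prod_of_mem (fun q => q ^ (N + 2)) hp))]

lemma excess_eq_of_modEq_sq {s : Finset ℕ} (hs : ∀ p ∈ s, p.Prime) {n w : ℕ}
    (hn : n ≠ 0) (hw : w ≠ 0) (hmod : n ≡ w [MOD w ^ 2])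
    (hsq : ∀ p ∈ s, ¬ p ∣ w → ¬ p ^ 2 ∣ n) : excess s n = excess s w := by
  refine sum_congr rfl fun p hp => ?_
  have hprime := hs p hp
  by_cases hpw : p ∣ w
  · have hv : 1 ≤ w.factorization p := (hprime.dvd_iff_one_le_factorization hw).mp hpw
    have hdvd : p ^ (w.factorization p + 1) ∣ w ^ 2 := by
      refine (pow_dvd_pow p (show _ ≤ w.factorization p * 2 by omega)).trans ?_
      rw [pow_mul]
      exact pow_dvd_pow_of_dvd (Nat.ordProj_dvd w p) 2
    have := min_factorization_eq_of_modEq hprime hn hw (hmod.of_dvd hdvd)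
    rw [min_eq_left (Nat.le_add_right _ 1)] at this
    rw [show n.factorization p = w.factorization p by omega]
  · have hn1 : n.factorization p ≤ 1 := by
      by_contra! h
      exact hsq p hp hpw ((hprime.pow_dvd_iff_le_factorization hn).mpr h)
    rw [Nat.factorization_eq_zero_of_not_dvd hpw, Nat.sub_eq_zero_of_le hn1]

lemma B_sub_beta_two_pow_mul_three_pow {a b : ℕ} (ha : a ≠ 0) (hb : b ≠ 0) :
    B (2 ^ a * 3 ^ b) - beta (2 ^ a * 3 ^ b) = (a - 1) * 2 + (b - 1) * 3 := by
  have h2a : 2 ^ a ≠ 0 := by positivity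
  have h3b : 3 ^ b ≠ 0 := by positivity
  rw [B_sub_beta_eq_excess, excess, Nat.primeFactors_mul h2a h3b,
    Nat.primeFactors_prime_pow ha Nat.prime_two, Nat.primeFactors_prime_pow hb Nat.prime_three,
    Nat.factorization_mul h2a h3b, Nat.prime_two.factorization_pow,
    Nat.prime_three.factorization_pow]
  simp [Finsupp.single_apply]

lemma exists_B_sub_beta_eq {N : ℕ} (hN : N = 0 ∨ 2 ≤ N) : ∃ w, w ≠ 0 ∧ B w - beta w = N := by
  rcases hN with rfl | h2
  · exact ⟨1, one_ne_zero, by simp [B, beta]⟩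
  obtain ⟨k, rfl | rfl⟩ := Nat.even_or_odd' N
  · refine ⟨2 ^ (k + 1) * 3 ^ 1, by positivity, ?_⟩
    rw [B_sub_beta_two_pow_mul_three_pow (by omega) (by omega)]
    omega
  · refine ⟨2 ^ k * 3 ^ 2, by positivity, ?_⟩
    rw [B_sub_beta_two_pow_mul_three_pow (by omega) (by omega)]
    omega

lemma exists_tendsto_of_forall_dist_le {α E : Type*} [PseudoMetricSpace E] [CompleteSpace E]
    {l : Filter α} [l.NeBot] {f : α → E} {F : ℕ → α → E} {L : ℕ → E} {ε : ℕ → ℝ}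
    (hF : ∀ Q, Tendsto (F Q) l (𝓝 (L Q))) (hε : Tendsto ε atTop (𝓝 0))
    (hfF : ∀ Q x, dist (f x) (F Q x) ≤ ε Q) :
    ∃ ℓ, Tendsto L atTop (𝓝 ℓ) ∧ Tendsto f l (𝓝 ℓ) := by
  have hL : ∀ Q Q', dist (L Q) (L Q') ≤ ε Q + ε Q' := fun Q Q' =>
    le_of_tendsto ((hF Q).dist (hF Q')) (Eventually.of_forall fun x =>
      (dist_triangle_left _ _ (f x)).trans (add_le_add (hfF Q x) (hfF Q' x)))
  have hsmall : ∀ δ > 0, ∀ᶠ Q in atTop, ε Q < δ := fun δ hδ =>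
    (hε.eventually (gt_mem_nhds hδ))
  have hcauchy : CauchySeq L := by
    refine Metric.cauchySeq_iff'.mpr fun δ hδ => ?_
    obtain ⟨Q₀, hQ₀⟩ := eventually_atTop.mp (hsmall (δ / 2) (half_pos hδ))
    exact ⟨Q₀, fun Q hQ => (hL Q Q₀).trans_lt (by linarith [hQ₀ Q hQ, hQ₀ Q₀ le_rfl])⟩
  obtain ⟨ℓ, hℓ⟩ := cauchySeq_tendsto_of_complete hcauchy
  have hunif : TendstoUniformly F f atTop := Metric.tendstoUniformly_iff.mpr fun δ hδ =>
    (hsmall δ hδ).mono fun Q hQ x => (hfF Q x).trans_lt hQ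
  exact ⟨ℓ, hℓ, hunif.tendsto_of_eventually_tendsto (Eventually.of_forall hF) hℓ⟩

section Counting

variable {p : ℕ → Prop} [DecidablePred p] {m : ℕ}

lemma Nat.count_mul_add_of_periodic (hp : Function.Periodic p m) (q x : ℕ) :
    Nat.count p (m * q + x) = q * Nat.count p m + Nat.count p x := by
  induction q generalizing x with
  | zero => simp
  | succ q ih =>
    have hshift : ∀ k, p (m + k) = p k := fun k => by rw [add_comm]; exact hp k
    rw [mul_add_one, add_assoc, ih, Nat.count_add, add_one_mul]
    simp only [hshift]
    ring

lemma tendsto_count_div_of_periodic (hp : Function.Periodic p m) (hm : 0 < m) :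
    Tendsto (fun x => (Nat.count p x : ℝ) / x) atTop (𝓝 (Nat.count p m / m)) := by
  have hbound : ∀ x, 0 < x → |(Nat.count p x : ℝ) / x - Nat.count p m / m| ≤ m / x := by
    intro x hx
    have hx' : (0 : ℝ) < x := by exact_mod_cast hx
    have hm' : (0 : ℝ) < m := by exact_mod_cast hm
    have hcount :
        (Nat.count p x : ℝ) = (x / m : ℕ) * Nat.count p m + Nat.count p (x % m) := by
      rw [← Nat.cast_mul, ← Nat.cast_add, ← Nat.count_mul_add_of_periodic hp, Nat.div_add_mod]
    have hx_eq : (x : ℝ) = (x / m : ℕ) * m + (x % m : ℕ) := by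
      exact_mod_cast (Nat.div_add_mod' x m).symm
    have hr : (Nat.count p (x % m) : ℝ) ≤ m := by
      exact_mod_cast (Nat.count_le _).trans (Nat.mod_lt x hm).le
    have hc : (Nat.count p m : ℝ) ≤ m := by exact_mod_cast Nat.count_le _
    have ht : ((x % m : ℕ) : ℝ) ≤ m := by exact_mod_cast (Nat.mod_lt x hm).le
    have herr : (Nat.count p x : ℝ) * m - x * Nat.count p m
        = Nat.count p (x % m) * m - (x % m : ℕ) * Nat.count p m := by
      rw [hcount, hx_eq]; ring
    have habs : |(Nat.count p x : ℝ) * m - x * Nat.count p m| ≤ m * m := by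
      rw [herr, abs_le]
      constructor <;> nlinarith [Nat.cast_nonneg (α := ℝ) (Nat.count p (x % m)),
        Nat.cast_nonneg (α := ℝ) (x % m), Nat.cast_nonneg (α := ℝ) (Nat.count p m)]
    rw [div_sub_div _ _ hx'.ne' hm'.ne', abs_div, abs_of_pos (mul_pos hx' hm'),
      div_le_div_iff₀ (mul_pos hx' hm') hx']
    nlinarith
  rw [tendsto_iff_dist_tendsto_zero]
  refine squeeze_zero' (Eventually.of_forall fun x => dist_nonneg) ?_
    (tendsto_const_div_atTop_nhds_zero_nat (m : ℝ))
  filter_upwards [eventually_gt_atTop 0] with x hx using hbound x hx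

end Counting

lemma card_filter_Icc_eq_count (P : ℕ → Prop) [DecidablePred P] (x : ℕ) :
    #{n ∈ Icc 1 x | P n} = Nat.count (fun n => P (n + 1)) x := by
  rw [Nat.count_eq_card_filter_range]
  refine card_nbij' (· - 1) (· + 1) ?_ ?_ ?_ ?_ <;> intro n hn <;>
    simp only [coe_filter, mem_Icc, mem_range, Set.mem_ofPred_eq] at hn ⊢
  · exact ⟨by omega, by rw [Nat.sub_add_cancel hn.1.1]; exact hn.2⟩
  · exact ⟨by omega, hn.2⟩
  · omega
  · omega

noncomputable def densityUpTo (P : ℕ → Prop) [DecidablePred P] (x : ℕ) : ℝ :=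
  #{n ∈ Icc 1 x | P n} / x

lemma tendsto_densityUpTo_of_periodic {P : ℕ → Prop} [DecidablePred P] {m : ℕ} (hm : 0 < m)
    (hP : ∀ n, 0 < n → (P (n + m) ↔ P n)) :
    Tendsto (densityUpTo P) atTop (𝓝 (densityUpTo P m)) := by
  have hper : Function.Periodic (fun n => P (n + 1)) m := fun n => by
    show P (n + m + 1) = P (n + 1)
    rw [add_right_comm]
    exact propext (hP (n + 1) n.succ_pos)
  have h := tendsto_count_div_of_periodic hper hm
  simp only [← card_filter_Icc_eq_count] at h
  exact h

lemma card_filter_le_card_filter_add_card_filter {α : Type*} {s : Finset α}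
    {P P' R : α → Prop} [DecidablePred P] [DecidablePred P'] [DecidablePred R]
    (h : ∀ a ∈ s, ¬ R a → P a → P' a) :
    #{a ∈ s | P a} ≤ #{a ∈ s | P' a} + #{a ∈ s | R a} := by
  classical
  refine (card_le_card fun a ha => ?_).trans (card_union_le _ _)
  obtain ⟨has, hPa⟩ := mem_filter.mp ha
  by_cases hR : R a
  · exact mem_union_right _ (mem_filter.mpr ⟨has, hR⟩)
  · exact mem_union_left _ (mem_filter.mpr ⟨has, h a has hR hPa⟩)

lemma abs_densityUpTo_sub_le {P P' R : ℕ → Prop} [DecidablePred P] [DecidablePred P']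
    [DecidablePred R] (h : ∀ n, 0 < n → ¬ R n → (P n ↔ P' n)) (x : ℕ) :
    |densityUpTo P x - densityUpTo P' x| ≤ densityUpTo R x := by
  have h₁ := card_filter_le_card_filter_add_card_filter (s := Icc 1 x) (P := P) (P' := P')
    (R := R) fun n hn hR => (h n (mem_Icc.mp hn).1 hR).mp
  have h₂ := card_filter_le_card_filter_add_card_filter (s := Icc 1 x) (P := P') (P' := P)
    (R := R) fun n hn hR => (h n (mem_Icc.mp hn).1 hR).mpr
  rw [densityUpTo, densityUpTo, densityUpTo, ← sub_div, abs_div, Nat.abs_cast]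
  gcongr
  rw [abs_sub_le_iff]
  constructor <;> linarith [(Nat.cast_le (α := ℝ)).mpr h₁, (Nat.cast_le (α := ℝ)).mpr h₂,
    Nat.cast_add (R := ℝ) #{n ∈ Icc 1 x | P n} #{n ∈ Icc 1 x | R n},
    Nat.cast_add (R := ℝ) #{n ∈ Icc 1 x | P' n} #{n ∈ Icc 1 x | R n}]

open Classical in
lemma densityUpTo_exists_sq_dvd_le (Q x : ℕ) :
    densityUpTo (fun n => ∃ d, Q < d ∧ d ^ 2 ∣ n) x ≤ 2 / (Q + 1) := by
  have hcover : {n ∈ Icc 1 x | ∃ d, Q < d ∧ d ^ 2 ∣ n} ⊆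
      (Ioo Q (x + 1)).biUnion fun d => {n ∈ Icc 1 x | d ^ 2 ∣ n} := by
    intro n hn
    obtain ⟨hnx, d, hQd, hdn⟩ := mem_filter.mp hn
    have hdx : d ≤ x := (Nat.le_self_pow two_ne_zero d).trans
      ((Nat.le_of_dvd (mem_Icc.mp hnx).1 hdn).trans (mem_Icc.mp hnx).2)
    exact mem_biUnion.mpr ⟨d, mem_Ioo.mpr ⟨hQd, by omega⟩, mem_filter.mpr ⟨hnx, hdn⟩⟩
  have hcard : (#{n ∈ Icc 1 x | ∃ d, Q < d ∧ d ^ 2 ∣ n} : ℝ) ≤ x * (2 / (Q + 1)) :=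
    calc (#{n ∈ Icc 1 x | ∃ d, Q < d ∧ d ^ 2 ∣ n} : ℝ)
        ≤ ∑ d ∈ Ioo Q (x + 1), (#{n ∈ Icc 1 x | d ^ 2 ∣ n} : ℝ) := by
          exact_mod_cast (card_le_card hcover).trans card_biUnion_le
      _ ≤ ∑ d ∈ Ioo Q (x + 1), x * ((d : ℝ) ^ 2)⁻¹ := by
          gcongr with d
          rw [show Icc 1 x = Ioc 0 x from rfl, Nat.Ioc_filter_dvd_card_eq_div, ← div_eq_mul_inv]
          exact_mod_cast Nat.cast_div_le
      _ ≤ x * (2 / (Q + 1)) := by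
          rw [← mul_sum]
          exact mul_le_mul_of_nonneg_left (sum_Ioo_inv_sq_le Q (x + 1)) (Nat.cast_nonneg x)
  exact div_le_of_le_mul₀ (Nat.cast_nonneg x) (by positivity) (by linarith)

lemma abs_card_filter_Icc_modEq_sub_le {r : ℕ} (hr : 0 < r) (x v : ℕ) :
    |(#{n ∈ Icc 1 x | n ≡ v [MOD r]} : ℝ) - x / r| ≤ 1 := by
  have hcard := Nat.Ioc_filter_modEq_card 0 x hr v
  set A : ℚ := (x - v) / r
  set B : ℚ := (((0 : ℕ) : ℚ) - v) / r
  have hAB : A - B = x / r := by simp only [A, B, Nat.cast_zero]; ring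
  have hle : ⌊B⌋ ≤ ⌊A⌋ := Int.floor_mono (by
    have : (0 : ℚ) ≤ x / r := by positivity
    linarith)
  rw [max_eq_left (by omega)] at hcard
  have hq : |(#{n ∈ Icc 1 x | n ≡ v [MOD r]} : ℚ) - x / r| ≤ 1 := by
    rw [show Icc 1 x = Ioc 0 x from rfl, ← Int.cast_natCast, hcard, Int.cast_sub, ← hAB,
      abs_le]
    constructor <;> linarith [Int.floor_le A, Int.lt_floor_add_one A, Int.floor_le B,
      Int.lt_floor_add_one B]
  have hr' := (Rat.cast_le (K := ℝ)).mpr hq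
  push_cast at hr'
  exact hr'

lemma card_filter_Icc_modEq_and_dvd_le {r k : ℕ} (hrk : r.Coprime k) (hr : 0 < r) (hk : 0 < k)
    (x v : ℕ) : (#{n ∈ Icc 1 x | n ≡ v [MOD r] ∧ k ∣ n} : ℝ) ≤ x / (r * k) + 1 := by
  set c := (Nat.chineseRemainder hrk v 0 : ℕ)
  have hsub : {n ∈ Icc 1 x | n ≡ v [MOD r] ∧ k ∣ n} ⊆ {n ∈ Icc 1 x | n ≡ c [MOD r * k]} := by
    intro n hn
    obtain ⟨hnx, hnv, hkn⟩ := mem_filter.mp hn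
    exact mem_filter.mpr
      ⟨hnx, Nat.chineseRemainder_modEq_unique hrk hnv (Nat.modEq_zero_iff_dvd.mpr hkn)⟩
  have h := abs_le.mp (abs_card_filter_Icc_modEq_sub_le (Nat.mul_pos hr hk) x c)
  push_cast at h
  linarith [(Nat.cast_le (α := ℝ)).mpr (card_le_card hsub)]

lemma sum_inv_sq_le_of_prime {s : Finset ℕ} (hs : ∀ p ∈ s, p.Prime) :
    ∑ p ∈ s, ((p : ℝ) ^ 2)⁻¹ ≤ 11 / 12 := by
  have hsub : s ⊆ insert 2 (Ioo 2 (s.sup id + 1)) := fun p hp => by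
    have h2 := (hs p hp).two_le
    have hle : p ≤ s.sup id := le_sup (f := id) hp
    rcases h2.eq_or_lt with rfl | h2
    · exact mem_insert_self _ _
    · exact mem_insert_of_mem (mem_Ioo.mpr ⟨h2, by omega⟩)
  calc ∑ p ∈ s, ((p : ℝ) ^ 2)⁻¹
      ≤ ∑ p ∈ insert 2 (Ioo 2 (s.sup id + 1)), ((p : ℝ) ^ 2)⁻¹ :=
        sum_le_sum_of_subset_of_nonneg hsub fun _ _ _ => by positivity
    _ ≤ 11 / 12 := by
        rw [sum_insert (by simp)]
        have := sum_Ioo_inv_sq_le (α := ℝ) 2 (s.sup id + 1)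
        norm_num at this ⊢
        linarith

lemma card_filter_excess_eq_ge {s : Finset ℕ} (hs : ∀ p ∈ s, p.Prime) {w : ℕ} (hw : w ≠ 0)
    (x : ℕ) :
    (x : ℝ) / (12 * w ^ 2) - (#s + 1) ≤ #{n ∈ Icc 1 x | excess s n = excess s w} := by
  set good := {n ∈ Icc 1 x | excess s n = excess s w}
  set s' := {p ∈ s | ¬ p ∣ w}
  set bad : ℕ → Finset ℕ := fun p => {n ∈ Icc 1 x | n ≡ w [MOD w ^ 2] ∧ p ^ 2 ∣ n}
  have hcover : {n ∈ Icc 1 x | n ≡ w [MOD w ^ 2]} ⊆ good ∪ s'.biUnion bad := by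
    intro n hn
    obtain ⟨hnx, hmod⟩ := mem_filter.mp hn
    by_cases hsq : ∀ p ∈ s, ¬ p ∣ w → ¬ p ^ 2 ∣ n
    · have hn0 : n ≠ 0 := (Nat.one_le_iff_ne_zero).mp (mem_Icc.mp hnx).1
      exact mem_union_left _ (mem_filter.mpr ⟨hnx, excess_eq_of_modEq_sq hs hn0 hw hmod hsq⟩)
    · push Not at hsq
      obtain ⟨p, hp, hpw, hpn⟩ := hsq
      exact mem_union_right _
        (mem_biUnion.mpr ⟨p, mem_filter.mpr ⟨hp, hpw⟩, mem_filter.mpr ⟨hnx, hmod, hpn⟩⟩)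
  have hbad : ∀ p ∈ s', (#(bad p) : ℝ) ≤ x / w ^ 2 * ((p : ℝ) ^ 2)⁻¹ + 1 := by
    intro p hp
    obtain ⟨hps, hpw⟩ := mem_filter.mp hp
    have hco : (w ^ 2).Coprime (p ^ 2) :=
      Nat.Coprime.pow 2 2 ((hs p hps).coprime_iff_not_dvd.mpr hpw).symm
    have h := card_filter_Icc_modEq_and_dvd_le hco (by positivity)
      (pow_pos (hs p hps).pos 2) x w
    push_cast at h
    rwa [← div_div, div_eq_mul_inv _ ((p : ℝ) ^ 2)] at h
  have hclass :=
    (abs_le.mp (abs_card_filter_Icc_modEq_sub_le (by positivity : 0 < w ^ 2) x w)).1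
  push_cast at hclass
  have hsum := sum_inv_sq_le_of_prime (s := s') fun p hp => hs p (mem_filter.mp hp).1
  have hs' : (#s' : ℝ) ≤ #s := by exact_mod_cast card_filter_le _ _
  have hbad_sum : ∑ p ∈ s', (#(bad p) : ℝ) ≤ 11 / 12 * (x / w ^ 2) + #s := by
    refine (sum_le_sum hbad).trans ?_
    rw [sum_add_distrib, ← mul_sum, sum_const, nsmul_one]
    nlinarith [div_nonneg (Nat.cast_nonneg (α := ℝ) x) (sq_nonneg (w : ℝ))]
  have hcard :
      (#{n ∈ Icc 1 x | n ≡ w [MOD w ^ 2]} : ℝ) ≤ #good + ∑ p ∈ s', (#(bad p) : ℝ) := by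
    exact_mod_cast (card_le_card hcover).trans
      ((card_union_le _ _).trans (Nat.add_le_add_left card_biUnion_le _))
  have hx : (x : ℝ) / (12 * w ^ 2) = x / w ^ 2 - 11 / 12 * (x / w ^ 2) := by ring
  linarith

lemma dist_densityUpTo_B_sub_beta_le (N Q x : ℕ) :
    dist (densityUpTo (fun n => B n - beta n = N) x)
      (densityUpTo (fun n => excess (Q + 1).primesBelow n = N) x) ≤ 2 / (Q + 1) := by
  classical
  refine (abs_densityUpTo_sub_le (R := fun n => ∃ d, Q < d ∧ d ^ 2 ∣ n) (fun n hn hR => ?_)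
    x).trans (densityUpTo_exists_sq_dvd_le Q x)
  push Not at hR
  rw [B_sub_beta_eq_excess_primesBelow Q hn.ne' hR]

lemma le_of_tendsto_densityUpTo_excess {s : Finset ℕ} (hs : ∀ p ∈ s, p.Prime) {w : ℕ}
    (hw : w ≠ 0) {ℓ : ℝ}
    (h : Tendsto (densityUpTo fun n => excess s n = excess s w) atTop (𝓝 ℓ)) :
    1 / (12 * (w : ℝ) ^ 2) ≤ ℓ := by
  have hlow : Tendsto (fun x : ℕ => 1 / (12 * (w : ℝ) ^ 2) - (#s + 1) / x) atTop
      (𝓝 (1 / (12 * (w : ℝ) ^ 2))) := by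
    simpa only [sub_zero] using (tendsto_const_nhds (x := 1 / (12 * (w : ℝ) ^ 2))).sub
      (tendsto_const_div_atTop_nhds_zero_nat ((#s : ℝ) + 1))
  refine le_of_tendsto_of_tendsto hlow h ?_
  filter_upwards [eventually_gt_atTop 0] with x hx
  have hx' : (0 : ℝ) < x := by exact_mod_cast hx
  rw [densityUpTo, le_div_iff₀ hx']
  calc (1 / (12 * (w : ℝ) ^ 2) - (#s + 1) / x) * x = x / (12 * w ^ 2) - (#s + 1) := by
        field_simp
    _ ≤ _ := card_filter_excess_eq_ge hs hw x

/-- For `N = 0` and for every fixed `N ≥ 2`, the set `{n : B(n) - β(n) = N}`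
has positive natural density. -/
theorem density_B_sub_beta_eq (N : ℕ) (hN : N = 0 ∨ 2 ≤ N) :
    ∃ d : ℝ, 0 < d ∧
      Tendsto
        (fun x : ℕ =>
          (((Finset.Icc 1 x).filter (fun n => B n - beta n = N)).card : ℝ) / (x : ℝ))
        atTop (nhds d) := by
  obtain ⟨w, hw, hwN⟩ := exists_B_sub_beta_eq hN
  set s : ℕ → Finset ℕ := fun Q => (Q + 1).primesBelow
  have hs : ∀ Q, ∀ p ∈ s Q, p.Prime := fun Q p hp => (Nat.mem_primesBelow.mp hp).2
  set period : ℕ → ℕ := fun Q => ∏ p ∈ s Q, p ^ (N + 2)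
  have hF : ∀ Q, Tendsto (densityUpTo fun n => excess (s Q) n = N) atTop
      (𝓝 (densityUpTo (fun n => excess (s Q) n = N) (period Q))) := fun Q =>
    tendsto_densityUpTo_of_periodic (prod_pos fun p hp => pow_pos (hs Q p hp).pos _)
      fun n hn => excess_eq_iff_of_modEq (hs Q) N (by omega) hn.ne' Nat.add_modEq_right
  have hε : Tendsto (fun Q : ℕ => (2 : ℝ) / (Q + 1)) atTop (𝓝 0) := by
    simpa [div_eq_mul_one_div (2 : ℝ)] using
      tendsto_one_div_add_atTop_nhds_zero_nat.const_mul (2 : ℝ)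
  obtain ⟨d, hd, hlim⟩ :=
    exists_tendsto_of_forall_dist_le hF hε (dist_densityUpTo_B_sub_beta_le N)
  refine ⟨d, ?_, hlim⟩
  have hwQ : ∀ Q ≥ w, excess (s Q) w = N := fun Q hQ => by
    rw [← hwN, B_sub_beta_eq_excess_primesBelow Q hw fun d hd hdw => ?_]
    have := Nat.le_of_dvd (Nat.pos_of_ne_zero hw) hdw
    have := Nat.le_self_pow two_ne_zero d
    omega
  have hlow : ∀ Q ≥ w, 1 / (12 * (w : ℝ) ^ 2) ≤
      densityUpTo (fun n => excess (s Q) n = N) (period Q) := fun Q hQ =>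
    le_of_tendsto_densityUpTo_excess (hs Q) hw (by rw [hwQ Q hQ]; exact hF Q)
  exact (by positivity : (0 : ℝ) < 1 / (12 * w ^ 2)).trans_le
    (ge_of_tendsto hd (eventually_atTop.mpr ⟨w, hlow⟩))
end

section
/- For every complex number s with Re(s) > 1, the Dirichlet series of the completely multiplicative function (−1)^{B(n)} satisfies ∑_{n=1}^∞ (−1)^{B(n)} n^{−s} = ((2^s + 1)/(2^s − 1)) · ζ(2s)/ζ(s), where ζ is the Riemann zeta function. -/
/-!
As `(-1)^{B(n)}` is completely multiplicative, its Dirichlet series is the Euler product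
`∏_p (1 - (-1)^p p^{-s})⁻¹`. At an odd prime the factor is `(1 + p^{-s})⁻¹`, and multiplying by
the zeta factor `(1 - p^{-s})⁻¹` gives the factor `(1 - p^{-2s})⁻¹` of `ζ(2s)`. At `p = 2` the
factor is `(1 - 2^{-s})⁻¹` and the same product leaves over `(1 + 2^{-s}) / (1 - 2^{-s})`, which is
`(2^s + 1) / (2^s - 1)`. Hence `ζ(s) L(s) = ζ(2s) (2^s + 1) / (2^s - 1)`.
-/

open Complex EulerProduct

lemma B_mul {m n : ℕ} (hm : m ≠ 0) (hn : n ≠ 0) : B (m * n) = B m + B n := by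
  rw [B, B, B, (Nat.perm_primeFactorsList_mul hm hn).sum_eq, List.sum_append]

lemma B_prime {p : ℕ} (hp : p.Prime) : B p = p := by
  simp [B, Nat.primeFactorsList_prime hp]

section Field

variable {K : Type*} [Field K]

lemma inv_one_sub_mul_inv_one_add (x : K) : (1 - x)⁻¹ * (1 + x)⁻¹ = (1 - x ^ 2)⁻¹ := by
  rw [← mul_inv]
  ring_nf

lemma inv_one_sub_inv_mul_self {y : K} (hy : y ≠ 0) (hy' : y + 1 ≠ 0) :
    (1 - y⁻¹)⁻¹ * (1 - y⁻¹)⁻¹ = (1 - y⁻¹ ^ 2)⁻¹ * ((y + 1) / (y - 1)) := by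
  rcases eq_or_ne y 1 with rfl | hy1
  · simp
  have hy1' : y - 1 ≠ 0 := sub_ne_zero.mpr hy1
  rw [show 1 - y⁻¹ = (y - 1) / y by field_simp, show 1 - y⁻¹ ^ 2 = (y - 1) * (y + 1) / y ^ 2 by
    field_simp; ring]
  field_simp

end Field

lemma one_lt_norm_two_cpow {s : ℂ} (hs : 0 < s.re) : 1 < ‖(2 : ℂ) ^ s‖ := by
  rw [← Nat.cast_ofNat, norm_natCast_cpow_of_pos two_pos]
  exact Real.one_lt_rpow one_lt_two hs

noncomputable def negOnePowBSummandHom {s : ℂ} (hs : s ≠ 0) : ℕ →*₀ ℂ where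
  toFun n := (-1 : ℂ) ^ B n * (n : ℂ) ^ (-s)
  map_zero' := by simp [hs]
  map_one' := by simp [B]
  map_mul' m n := by
    rcases eq_or_ne m 0 with rfl | hm
    · simp [hs]
    rcases eq_or_ne n 0 with rfl | hn
    · simp [hs]
    have hcpow := map_mul (riemannZetaSummandHom hs) m n
    simp only [riemannZetaSummandHom, MonoidWithZeroHom.coe_mk, ZeroHom.coe_mk] at hcpow
    simp only [B_mul hm hn, pow_add, hcpow]
    ring

section

variable {s : ℂ} (hs : s ≠ 0)

lemma negOnePowBSummandHom_apply (n : ℕ) :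
    negOnePowBSummandHom hs n = (-1 : ℂ) ^ B n * (n : ℂ) ^ (-s) := rfl

lemma norm_negOnePowBSummandHom (n : ℕ) :
    ‖negOnePowBSummandHom hs n‖ = ‖riemannZetaSummandHom hs n‖ := by
  simp [negOnePowBSummandHom_apply, riemannZetaSummandHom]

end

lemma summable_norm_negOnePowBSummandHom {s : ℂ} (hs : 1 < s.re) :
    Summable fun n ↦ ‖negOnePowBSummandHom (ne_zero_of_one_lt_re hs) n‖ := by
  simpa only [norm_negOnePowBSummandHom] using summable_riemannZetaSummand hs

lemma eulerFactor_zeta_mul_eulerFactor_negOnePowB {s : ℂ} (hs : 0 < s.re) (p : Nat.Primes) :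
    (1 - (p : ℂ) ^ (-s))⁻¹ * (1 - negOnePowBSummandHom (ne_zero_of_re_pos hs) p)⁻¹ =
      (1 - (p : ℂ) ^ (-(2 * s)))⁻¹ *
        if (p : ℕ) = 2 then (2 ^ s + 1) / (2 ^ s - 1) else 1 := by
  have hp := p.prop
  have hsq : (p : ℂ) ^ (-(2 * s)) = ((p : ℂ) ^ (-s)) ^ 2 := by
    rw [← cpow_nat_mul]
    ring_nf
  rw [negOnePowBSummandHom_apply, B_prime hp, hsq]
  by_cases hp2 : (p : ℕ) = 2
  · have hnorm := one_lt_norm_two_cpow hs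
    rw [if_pos hp2, hp2, Nat.cast_ofNat, cpow_neg, neg_one_sq, one_mul]
    refine inv_one_sub_inv_mul_self (fun h ↦ ?_) (fun h ↦ ?_)
    · norm_num [h] at hnorm
    · norm_num [eq_neg_of_add_eq_zero_left h] at hnorm
  · rw [if_neg hp2, mul_one, (hp.odd_of_ne_two hp2).neg_one_pow, neg_one_mul,
      sub_neg_eq_add, inv_one_sub_mul_inv_one_add]

/-- For `Re(s) > 1`, the Dirichlet series of `(-1)^{B(n)}` equals
`((2^s + 1)/(2^s - 1)) ζ(2s)/ζ(s)`. -/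
theorem dirichlet_series_neg_one_pow_B (s : ℂ) (hs : 1 < s.re) :
    ∑' n : ℕ+, (-1 : ℂ) ^ B n / (n : ℂ) ^ s =
      (2 ^ s + 1) / (2 ^ s - 1) * (riemannZeta (2 * s) / riemannZeta s) := by
  set L := negOnePowBSummandHom (ne_zero_of_one_lt_re hs)
  set E : ℂ := (2 ^ s + 1) / (2 ^ s - 1)
  have hL : ∑' n : ℕ+, (-1 : ℂ) ^ B n / (n : ℂ) ^ s = ∑' n, L n := by
    rw [← tsum_pnat_eq_tsum_of_eq_zero (map_zero L)]
    simp only [L, negOnePowBSummandHom_apply, cpow_neg, div_eq_mul_inv]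
  have hE : HasProd (fun p : Nat.Primes ↦ if (p : ℕ) = 2 then E else 1) E := by
    simpa using hasProd_single (f := fun p : Nat.Primes ↦ if (p : ℕ) = 2 then E else 1)
      ⟨2, Nat.prime_two⟩ fun q hq ↦ if_neg fun h ↦ hq (Subtype.ext h)
  have h2s : 1 < (2 * s).re := by
    simp only [mul_re, re_ofNat, im_ofNat, zero_mul, sub_zero]
    linarith
  have hprod := (riemannZeta_eulerProduct_hasProd hs).mul
    (eulerProduct_completely_multiplicative_hasProd (summable_norm_negOnePowBSummandHom hs))
  have hprod₂ := (riemannZeta_eulerProduct_hasProd h2s).mul hE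
  have key : riemannZeta s * ∑' n, L n = riemannZeta (2 * s) * E := by
    refine hprod.unique ?_
    simpa only [eulerFactor_zeta_mul_eulerFactor_negOnePowB (zero_lt_one.trans hs)] using hprod₂
  rw [hL, mul_div_assoc', eq_div_iff (riemannZeta_ne_zero_of_one_lt_re hs), mul_comm, key,
    mul_comm]
end

section
/- For every positive integer a, the map B_a has only finitely many cycles and all positive integers iterate to cycles: the set of periodic points of B_a is finite, and for every integer n ≥ 2 there exist integers k ≥ 0 and l ≥ 1 such that B_a^{k+l}(n) = B_a^k(n); in particular no orbit of B_a is unbounded. -/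
/-- `Ba a n = n + a` if `n` is prime, and `B n` otherwise. -/
def Ba (a n : ℕ) : ℕ := if n.Prime then n + a else B n

theorem Function.exists_iterate_add_eq_of_mem_finite {α : Type*} {f : α → α} {s : Set α}
    (hs : s.Finite) {x : α} (hx : ∀ k, f^[k] x ∈ s) :
    ∃ k l : ℕ, 1 ≤ l ∧ f^[k + l] x = f^[k] x := by
  obtain ⟨i, j, hij, hfij⟩ := Set.Finite.exists_lt_map_eq_of_forall_mem hx hs
  exact ⟨i, j - i, by omega, by rw [Nat.add_sub_cancel' hij.le, hfij]⟩

lemma B_eq_minFac_add {n : ℕ} (hn : 2 ≤ n) : B n = n.minFac + B (n / n.minFac) := by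
  obtain ⟨m, rfl⟩ := Nat.exists_eq_add_of_le' hn
  simp [B, Nat.primeFactorsList_add_two]

lemma B_le_self (n : ℕ) : B n ≤ n := by
  induction n using Nat.strong_induction_on with
  | _ n ih =>
  rcases lt_or_ge n 2 with hn | hn
  · interval_cases n <;> simp [B]
  have hp := Nat.minFac_prime (by omega : n ≠ 1)
  have hn_eq : n.minFac * (n / n.minFac) = n := Nat.mul_div_cancel' n.minFac_dvd
  rw [B_eq_minFac_add hn]
  rcases Nat.lt_or_ge (n / n.minFac) 2 with hc | hc
  · have hc1 : n / n.minFac = 1 := by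
      have := Nat.div_pos (Nat.minFac_le (by omega)) n.minFac_pos
      omega
    rw [hc1, mul_one] at hn_eq
    rw [hc1]
    simp [hn_eq, B]
  calc n.minFac + B (n / n.minFac)
      ≤ n.minFac + n / n.minFac := by
        gcongr; exact ih _ (Nat.div_lt_self (by omega) hp.one_lt)
    _ ≤ n.minFac * (n / n.minFac) := add_le_mul hp.two_le hc
    _ = n := hn_eq

lemma two_mul_B_le_of_not_prime {n : ℕ} (hn : ¬ n.Prime) : 2 * B n ≤ n + 4 := by
  rcases lt_or_ge n 2 with hn2 | hn2
  · interval_cases n <;> simp [B]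
  have hp := Nat.minFac_prime (by omega : n ≠ 1)
  have hpc : n.minFac ≤ n / n.minFac := Nat.minFac_le_div (by omega) hn
  have hn_eq : n.minFac * (n / n.minFac) = n := Nat.mul_div_cancel' n.minFac_dvd
  have hBc := B_le_self (n / n.minFac)
  have hp2 := hp.two_le
  rw [B_eq_minFac_add hn2]
  nlinarith

lemma exists_lt_dvd_add_mul {a r : ℕ} (hr : r.Prime) (hra : ¬ r ∣ a) (y : ℕ) :
    ∃ s < r, r ∣ y + s * a := by
  have : Fact r.Prime := ⟨hr⟩
  have ha : (a : ZMod r) ≠ 0 := by rwa [Ne, ZMod.natCast_eq_zero_iff]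
  refine ⟨(-(y : ZMod r) * (a : ZMod r)⁻¹).val, ZMod.val_lt _, ?_⟩
  rw [← ZMod.natCast_eq_zero_iff]
  push_cast
  rw [ZMod.natCast_zmod_val, mul_assoc, inv_mul_cancel₀ ha]
  ring

lemma exists_le_not_prime_add_mul {a r : ℕ} (hr : r.Prime) (hra : ¬ r ∣ a) (y : ℕ) :
    ∃ t ≤ 2 * r, ¬ (y + t * a).Prime := by
  obtain ⟨s, hsr, hdvd⟩ := exists_lt_dvd_add_mul hr hra (y + a)
  have ha : 1 ≤ a := Nat.one_le_iff_ne_zero.mpr (by rintro rfl; exact hra (dvd_zero r))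
  -- shifting the index by `r` keeps divisibility by `r` and makes the term exceed `r`
  refine ⟨s + 1 + r, by omega, Nat.not_prime_of_dvd_of_lt ?_ hr.two_le ?_⟩
  · have : y + (s + 1 + r) * a = y + a + s * a + r * a := by ring
    rw [this]
    exact dvd_add hdvd (dvd_mul_right r a)
  · nlinarith

section FirstNonprime

variable {a r : ℕ}

noncomputable def primeRun (a y : ℕ) : ℕ := sInf {t | ¬ (y + t * a).Prime}

/-- Junk value `y` if `y, y + a, y + 2a, …` are all prime, which can only happen for `a = 0`. -/
noncomputable def firstNonprime (a y : ℕ) : ℕ := y + primeRun a y * a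

lemma le_firstNonprime (a y : ℕ) : y ≤ firstNonprime a y := Nat.le_add_right _ _

lemma firstNonprime_of_not_prime {y : ℕ} (hy : ¬ y.Prime) : firstNonprime a y = y := by
  simp [firstNonprime, primeRun, Nat.sInf_eq_zero, hy]

lemma primeRun_le (hr : r.Prime) (hra : ¬ r ∣ a) (y : ℕ) : primeRun a y ≤ 2 * r := by
  obtain ⟨t, ht, hnp⟩ := exists_le_not_prime_add_mul hr hra y
  exact (Nat.sInf_le hnp).trans ht

lemma firstNonprime_le (hr : r.Prime) (hra : ¬ r ∣ a) (y : ℕ) :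
    firstNonprime a y ≤ y + 2 * r * a := by
  unfold firstNonprime
  gcongr
  exact primeRun_le hr hra y

lemma not_prime_firstNonprime (hr : r.Prime) (hra : ¬ r ∣ a) (y : ℕ) :
    ¬ (firstNonprime a y).Prime := by
  obtain ⟨t, -, hnp⟩ := exists_le_not_prime_add_mul hr hra y
  exact Nat.sInf_mem (s := {t | ¬ (y + t * a).Prime}) ⟨t, hnp⟩

lemma firstNonprime_add_of_prime (hr : r.Prime) (hra : ¬ r ∣ a) {y : ℕ} (hy : y.Prime) :
    firstNonprime a (y + a) = firstNonprime a y := by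
  have hpos : 1 ≤ primeRun a y := by
    refine Nat.one_le_iff_ne_zero.mpr fun h0 => not_prime_firstNonprime hr hra y ?_
    simpa [firstNonprime, h0] using hy
  have hshift := Nat.sInf_add (p := fun t => ¬ (y + t * a).Prime) hpos
  have hset : {t | ¬ (y + (t + 1) * a).Prime} = {t | ¬ (y + a + t * a).Prime} := by
    ext t; simp only [Set.mem_ofPred_eq]; ring_nf
  rw [hset] at hshift
  simp only [firstNonprime, primeRun] at hshift ⊢
  rw [← hshift]
  ring

lemma iterate_Ba_of_forall_prime {y k : ℕ} (hk : ∀ i < k, (y + i * a).Prime) :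
    (Ba a)^[k] y = y + k * a := by
  induction k with
  | zero => simp
  | succ k ih =>
    rw [Function.iterate_succ_apply', ih fun i hi => hk i (by omega),
      Ba, if_pos (hk k (by omega))]
    ring

lemma iterate_primeRun (y : ℕ) : (Ba a)^[primeRun a y] y = firstNonprime a y :=
  iterate_Ba_of_forall_prime fun _ hi => not_not.mp (Nat.notMem_of_lt_sInf hi)

lemma two_mul_firstNonprime_Ba_le (hr : r.Prime) (hra : ¬ r ∣ a) {x : ℕ} (hx : ¬ x.Prime) :
    2 * firstNonprime a (Ba a x) ≤ x + (4 * r * a + 4) := by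
  have hB := two_mul_B_le_of_not_prime hx
  have hφ := firstNonprime_le hr hra (B x)
  rw [Ba, if_neg hx]
  nlinarith

lemma firstNonprime_Ba_le (hr : r.Prime) (hra : ¬ r ∣ a) (x : ℕ) :
    firstNonprime a (Ba a x) ≤ max (firstNonprime a x) (4 * r * a + 4) := by
  by_cases hx : x.Prime
  · rw [Ba, if_pos hx, firstNonprime_add_of_prime hr hra hx]
    exact le_max_left _ _
  · have := two_mul_firstNonprime_Ba_le hr hra hx
    rw [firstNonprime_of_not_prime hx]
    omega

lemma firstNonprime_iterate_Ba_le (hr : r.Prime) (hra : ¬ r ∣ a) (x k : ℕ) :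
    firstNonprime a ((Ba a)^[k] x) ≤ max (firstNonprime a x) (4 * r * a + 4) := by
  set N := max (firstNonprime a x) (4 * r * a + 4)
  have hmaps : Set.MapsTo (Ba a) {y | firstNonprime a y ≤ N} {y | firstNonprime a y ≤ N} :=
    fun y hy => (firstNonprime_Ba_le hr hra y).trans (max_le hy (le_max_right _ _))
  exact hmaps.iterate k (le_max_left _ _ : firstNonprime a x ≤ N)

lemma le_of_iterate_Ba_eq (hr : r.Prime) (hra : ¬ r ∣ a) {n l : ℕ} (hl : 1 ≤ l)
    (hn : (Ba a)^[l] n = n) : n ≤ 4 * r * a + 4 := by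
  obtain ⟨l, rfl⟩ : ∃ m, l = m + 1 := ⟨l - 1, by omega⟩
  obtain ⟨q, hq_def⟩ : ∃ q, firstNonprime a n = q := ⟨_, rfl⟩
  have hq : (Ba a)^[l] (Ba a q) = q := by
    rw [← Function.iterate_succ_apply, ← hq_def, ← iterate_primeRun, ← Function.iterate_add_apply,
      add_comm, Function.iterate_add_apply, hn]
  have hq_le : q ≤ max (firstNonprime a (Ba a q)) (4 * r * a + 4) := by
    calc q ≤ firstNonprime a q := le_firstNonprime a q
      _ = firstNonprime a ((Ba a)^[l] (Ba a q)) := by rw [hq]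
      _ ≤ _ := firstNonprime_iterate_Ba_le hr hra _ l
  have hdrop := two_mul_firstNonprime_Ba_le hr hra (hq_def ▸ not_prime_firstNonprime hr hra n)
  have hnq := hq_def ▸ le_firstNonprime a n
  omega

end FirstNonprime

/-- For every `a`, `B_a` has finitely many cycles (the set of periodic points
is finite), and every integer `n ≥ 2` iterates to a cycle. -/
theorem Ba_finitely_many_cycles (a : ℕ) (ha : 0 < a) :
    {n : ℕ | ∃ l : ℕ, 1 ≤ l ∧ (Ba a)^[l] n = n}.Finite ∧
      ∀ n : ℕ, 2 ≤ n → ∃ k l : ℕ, 1 ≤ l ∧ (Ba a)^[k + l] n = (Ba a)^[k] n := by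
  obtain ⟨r, har, hr⟩ := Nat.exists_infinite_primes (a + 1)
  have hra : ¬ r ∣ a := fun h => by have := Nat.le_of_dvd ha h; omega
  refine ⟨?_, fun n _ => ?_⟩
  · refine (Set.finite_Iic (4 * r * a + 4)).subset ?_
    rintro n ⟨l, hl, hn⟩
    exact le_of_iterate_Ba_eq hr hra hl hn
  · refine Function.exists_iterate_add_eq_of_mem_finite
      (Set.finite_Iic (max (firstNonprime a n) (4 * r * a + 4))) fun k => ?_
    exact (le_firstNonprime a _).trans (firstNonprime_iterate_Ba_le hr hra n k)
end
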